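/- (Deterministic log-transform lemma behind the Krylov–Bogolyubov bound.) Let y : [0,∞) → [0,∞) be differentiable and suppose y'(t) + β y(t) ≤ C y(t) ξ(t) + C η(t) for all t, where β, C > 0 and ξ, η ≥ 0 are locally integrable. Fix M ≥ 2 and set ζ(t) = log(max(y(t), M/2)). Then for all t where the derivatives exist, ζ'(t) + β·1_{{y(t) ≥ M/2}} ≤ C ξ(t) + (2C/M) η(t); consequently, for T > 0, β ∫₀^T 1_{{y(t) ≥ M/2}} dt ≤ ζ(0) - ζ(T) + C ∫₀^T ξ(t) dt + (2C/M) ∫₀^T η(t) dt. -/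

import Mathlib

open Real MeasureTheory Set Filter Topology Asymptotics

/-!
The function `ζ = log ∘ max(y, M/2)` need not be differentiable where `y` crosses the level
`M/2`, but it always has a right derivative: `y'/y` where `y > M/2`, or `y = M/2` and `y' > 0`,
and `0` otherwise. Dividing the differential inequality by `y ≥ M/2` bounds this right derivative by
`Cξ + (2C/M)η - β` on `{y ≥ M/2}`, except at points where `y = M/2` and `y' ≠ 0`; these are
isolated, hence countable and Lebesgue-null. The integral bound then follows from the comparison
form of the fundamental theorem of calculus for right derivatives. Where `ζ` is differentiable at a
point with `y = M/2`, its derivative agrees with the right derivative and `y'` vanishes, because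
`max(y, M/2)` has a minimum and `y - max(y, M/2)` a maximum there.
-/

-- the right derivative of `max (f ·) c` at a point where `f = a` and `f' = a'`
noncomputable def maxConstRightDeriv (c a a' : ℝ) : ℝ :=
  if a < c then 0 else if c < a then a' else max a' 0

theorem HasDerivAt.hasDerivWithinAt_Ioi_max_const {f : ℝ → ℝ} {f' t : ℝ} (c : ℝ)
    (hf : HasDerivAt f f' t) :
    HasDerivWithinAt (fun s => max (f s) c) (maxConstRightDeriv c (f t) f') (Ioi t) t := by
  unfold maxConstRightDeriv
  rcases lt_trichotomy (f t) c with h | rfl | h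
  · rw [if_pos h]
    refine (hasDerivWithinAt_const t _ c).congr_of_eventuallyEq ?_ (max_eq_right h.le)
    filter_upwards [nhdsWithin_le_nhds (hf.continuousAt.eventually_lt continuousAt_const h)]
      with s hs using max_eq_right hs.le
  · simp only [lt_irrefl, if_false]
    rw [hasDerivWithinAt_iff_isLittleO]
    refine IsBigO.trans_isLittleO ?_ ((hasDerivAt_iff_isLittleO.1 hf).mono nhdsWithin_le_nhds)
    -- at the crossing, `max (f ·) c - c` is the positive part of `f - f t`, which is 1-Lipschitz
    refine IsBigO.of_bound 1 (eventually_nhdsWithin_of_forall fun s (hs : t < s) => ?_)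
    have key : max (f s) (f t) - max (f t) (f t) - (s - t) • max f' 0
        = max (f s - f t) 0 - max ((s - t) • f') 0 := by
      rw [max_self, ← max_sub_sub_right, sub_self, smul_eq_mul, smul_eq_mul,
        mul_max_of_nonneg _ _ (sub_pos.2 hs).le, mul_zero]
    rw [key, one_mul, Real.norm_eq_abs, Real.norm_eq_abs]
    exact abs_max_sub_max_le_abs _ _ _
  · rw [if_neg h.not_gt, if_pos h]
    refine hf.hasDerivWithinAt.congr_of_eventuallyEq ?_ (max_eq_left h.le)
    filter_upwards [nhdsWithin_le_nhds (continuousAt_const.eventually_lt hf.continuousAt h)]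
      with s hs using max_eq_left hs.le

theorem HasDerivAt.eq_zero_of_hasDerivAt_max_const {f : ℝ → ℝ} {f' m' c t : ℝ}
    (hf : HasDerivAt f f' t) (hm : HasDerivAt (fun s => max (f s) c) m' t) (ht : f t = c) :
    f' = 0 := by
  have hmin : IsLocalMin (fun s => max (f s) c) t :=
    Eventually.of_forall fun s => by simp [ht]
  have hmax : IsLocalMax (fun s => f s - max (f s) c) t :=
    Eventually.of_forall fun s => by simp [ht]
  have := hmax.hasDerivAt_eq_zero (hf.sub hm)
  rw [hmin.hasDerivAt_eq_zero hm] at this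
  linarith

theorem div_add_le_of_add_mul_le {a x β C ξ η c : ℝ} (hc : 0 < c) (hx : c ≤ x)
    (hC : 0 ≤ C) (hη : 0 ≤ η) (h : a + β * x ≤ C * x * ξ + C * η) :
    a / x + β ≤ C * ξ + C / c * η := by
  have hx0 : 0 < x := hc.trans_le hx
  calc a / x + β = (a + β * x) / x := by field_simp
    _ ≤ (C * x * ξ + C * η) / x := by gcongr
    _ = C * ξ + C * η / x := by field_simp
    _ ≤ C * ξ + C / c * η := by
      rw [div_mul_eq_mul_div]; gcongr

theorem countable_setOf_eq_and_deriv_ne {f f' : ℝ → ℝ} (c : ℝ)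
    (hf : ∀ t, HasDerivAt f (f' t) t) : {t | f t = c ∧ f' t ≠ 0}.Countable := by
  rw [← Set.countable_coe_iff]
  have : DiscreteTopology {t | f t = c ∧ f' t ≠ 0} := by
    rw [discreteTopology_subtype_iff]
    intro x hx
    rw [inf_principal_eq_bot]
    filter_upwards [(hf x).eventually_ne hx.2] with s hs hsS
    exact hs (hsS.1.trans hx.1.symm)
  exact TopologicalSpace.separableSpace_iff_countable.mp inferInstance

theorem HasDerivAt.hasDerivWithinAt_Ioi_log_max_const {f : ℝ → ℝ} {f' c t : ℝ} (hc : 0 < c)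
    (hf : HasDerivAt f f' t) :
    HasDerivWithinAt (fun s => Real.log (max (f s) c))
      (maxConstRightDeriv c (f t) f' / max (f t) c) (Ioi t) t :=
  (hf.hasDerivWithinAt_Ioi_max_const c).log (lt_max_of_lt_right hc).ne'

theorem maxConstRightDeriv_div_add_indicator_le {y y' ξ η : ℝ → ℝ} {β C c t : ℝ}
    (hc : 0 < c) (hβ : 0 ≤ β) (hC : 0 ≤ C) (hξ : 0 ≤ ξ t) (hη : 0 ≤ η t)
    (h : y' t + β * y t ≤ C * y t * ξ t + C * η t) :
    maxConstRightDeriv c (y t) (y' t) / max (y t) c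
        + β * ({s | c ≤ y s} \ {s | y s = c ∧ y' s ≠ 0}).indicator (fun _ => 1) t
      ≤ C * ξ t + C / c * η t := by
  have hrhs : 0 ≤ C * ξ t + C / c * η t := by positivity
  have hbound : c ≤ y t → y' t / y t + β ≤ C * ξ t + C / c * η t :=
    fun hyt => div_add_le_of_add_mul_le hc hyt hC hη h
  unfold maxConstRightDeriv
  simp only [indicator, Set.mem_sdiff, Set.mem_ofPred_eq]
  rcases lt_trichotomy (y t) c with hlt | heq | hgt
  · simp [hlt, hlt.not_ge, hrhs]
  · have hb := hbound heq.ge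
    rw [heq] at hb
    by_cases hy' : y' t = 0
    · rw [hy', zero_div] at hb
      simpa [heq, hy'] using hb
    · rcases le_total (y' t) 0 with hneg | hpos
      · simpa [heq, hy', hneg] using hrhs
      · simpa [heq, hy', max_eq_left hpos] using hb.trans' (by linarith)
  · simpa [hgt.not_gt, hgt, hgt.le, hgt.ne'] using hbound hgt.le

theorem sub_add_mul_integral_indicator_le {g g' ψ : ℝ → ℝ} {B : Set ℝ} {a b β : ℝ}
    (hab : a ≤ b) (hcont : ContinuousOn g (Icc a b))
    (hderiv : ∀ x ∈ Ioo a b, HasDerivWithinAt g (g' x) (Ioi x) x)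
    (hψ : IntegrableOn ψ (Icc a b)) (hB : MeasurableSet B)
    (hle : ∀ x ∈ Ioo a b, g' x + β * B.indicator (fun _ => 1) x ≤ ψ x) :
    g b - g a + β * ∫ x in a..b, B.indicator (fun _ => (1 : ℝ)) x ≤ ∫ x in a..b, ψ x := by
  have hind : IntegrableOn (B.indicator fun _ => (1 : ℝ)) (Icc a b) :=
    (integrableOn_const (C := (1 : ℝ)) measure_Icc_lt_top.ne).indicator hB
  have key := intervalIntegral.sub_le_integral_of_hasDeriv_right_of_le
    (φ := fun x => ψ x - β * B.indicator (fun _ => 1) x) hab hcont hderiv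
    (hψ.sub (hind.const_mul β)) fun x hx => le_sub_iff_add_le.2 (hle x hx)
  have hii {f : ℝ → ℝ} (hf : IntegrableOn f (Icc a b)) : IntervalIntegrable f volume a b :=
    IntegrableOn.intervalIntegrable (by rwa [uIcc_of_le hab])
  rw [intervalIntegral.integral_sub (hii hψ) (hii (hind.const_mul β)),
    intervalIntegral.integral_const_mul] at key
  linarith

theorem log_max_const_hasDerivAt_add_indicator_le {y y' ξ η : ℝ → ℝ} {β C c t z : ℝ}
    (hc : 0 < c) (hβ : 0 ≤ β) (hC : 0 ≤ C) (hy : HasDerivAt y (y' t) t) (hξ : 0 ≤ ξ t)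
    (hη : 0 ≤ η t) (hineq : y' t + β * y t ≤ C * y t * ξ t + C * η t)
    (hz : HasDerivAt (fun s => Real.log (max (y s) c)) z t) :
    z + β * {s | c ≤ y s}.indicator (fun _ => 1) t ≤ C * ξ t + C / c * η t := by
  have hz' := (uniqueDiffWithinAt_Ioi t).eq_deriv _ hz.hasDerivWithinAt
    (hy.hasDerivWithinAt_Ioi_log_max_const hc)
  have hmax := hz.exp
  simp only [exp_log (lt_max_of_lt_right hc)] at hmax
  have hcross : y t = c → y' t = 0 := hy.eq_zero_of_hasDerivAt_max_const hmax
  simpa [hz', indicator, and_iff_left hcross] using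
    maxConstRightDeriv_div_add_indicator_le hc hβ hC hξ hη hineq

theorem mul_integral_indicator_le_log_max_const {y y' ξ η : ℝ → ℝ} {β C c a b : ℝ}
    (hc : 0 < c) (hβ : 0 ≤ β) (hC : 0 ≤ C) (hy : ∀ t, HasDerivAt y (y' t) t)
    (hξ : ∀ t, 0 ≤ ξ t) (hη : ∀ t, 0 ≤ η t) (hξloc : LocallyIntegrable ξ)
    (hηloc : LocallyIntegrable η) (hineq : ∀ t, y' t + β * y t ≤ C * y t * ξ t + C * η t)
    (hab : a ≤ b) :
    β * ∫ t in a..b, {s | c ≤ y s}.indicator (fun _ => (1 : ℝ)) t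
      ≤ Real.log (max (y a) c) - Real.log (max (y b) c)
          + C * (∫ t in a..b, ξ t) + C / c * ∫ t in a..b, η t := by
  have ycont : Continuous y := continuous_iff_continuousAt.2 fun t => (hy t).continuousAt
  have hS : {s | y s = c ∧ y' s ≠ 0}.Countable := countable_setOf_eq_and_deriv_ne c hy
  have hA : MeasurableSet {s | c ≤ y s} := (isClosed_le continuous_const ycont).measurableSet
  have hζ : Continuous fun s => Real.log (max (y s) c) :=
    (ycont.max continuous_const).log fun s => (lt_max_of_lt_right hc).ne'
  have hint {f : ℝ → ℝ} (hf : LocallyIntegrable f) : IntegrableOn f (Icc a b) :=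
    hf.integrableOn_isCompact isCompact_Icc
  have key := sub_add_mul_integral_indicator_le (ψ := fun t => C * ξ t + C / c * η t) hab
    hζ.continuousOn (fun t _ => (hy t).hasDerivWithinAt_Ioi_log_max_const hc)
    (((hint hξloc).const_mul C).add ((hint hηloc).const_mul (C / c)))
    (hA.diff hS.measurableSet)
    (fun t _ => maxConstRightDeriv_div_add_indicator_le hc hβ hC (hξ t) (hη t) (hineq t))
  have hnull : (∫ t in a..b, ({s | c ≤ y s} \ {s | y s = c ∧ y' s ≠ 0}).indicator
        (fun _ => (1 : ℝ)) t) = ∫ t in a..b, {s | c ≤ y s}.indicator (fun _ => (1 : ℝ)) t :=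
    intervalIntegral.integral_congr_ae <|
      (indicator_ae_eq_of_ae_eq_set (sdiff_null_ae_eq_self (hS.measure_zero _))).mono
        fun _ ht _ => ht
  have hii {f : ℝ → ℝ} (hf : LocallyIntegrable f) : IntervalIntegrable f volume a b :=
    (hf.integrableOn_isCompact isCompact_uIcc).intervalIntegrable
  rw [hnull, intervalIntegral.integral_add ((hii hξloc).const_mul C) ((hii hηloc).const_mul _),
    intervalIntegral.integral_const_mul, intervalIntegral.integral_const_mul] at key
  linarith

theorem stmt12_general (y y' ξ η : ℝ → ℝ) (β C M : ℝ)
    (hβ : 0 < β) (hC : 0 < C) (hM : 2 ≤ M)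
    (hy : ∀ t, HasDerivAt y (y' t) t)
    (hξnn : ∀ t, 0 ≤ ξ t) (hηnn : ∀ t, 0 ≤ η t)
    (hξloc : LocallyIntegrable ξ) (hηloc : LocallyIntegrable η)
    (hineq : ∀ t, y' t + β * y t ≤ C * y t * ξ t + C * η t) :
    (∀ t z, HasDerivAt (fun s => Real.log (max (y s) (M / 2))) z t →
      z + β * Set.indicator {s : ℝ | M / 2 ≤ y s} (fun _ => (1:ℝ)) t
        ≤ C * ξ t + (2 * C / M) * η t) ∧
    (∀ T : ℝ, 0 < T →
      β * ∫ t in (0:ℝ)..T, Set.indicator {s : ℝ | M / 2 ≤ y s} (fun _ => (1:ℝ)) t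
        ≤ Real.log (max (y 0) (M / 2)) - Real.log (max (y T) (M / 2))
            + C * (∫ t in (0:ℝ)..T, ξ t) + (2 * C / M) * ∫ t in (0:ℝ)..T, η t) := by
  have hc : 0 < M / 2 := by linarith
  rw [show 2 * C / M = C / (M / 2) by ring]
  exact ⟨fun t z hz => log_max_const_hasDerivAt_add_indicator_le hc hβ.le hC.le (hy t)
      (hξnn t) (hηnn t) (hineq t) hz,
    fun T hT => mul_integral_indicator_le_log_max_const hc hβ.le hC.le hy hξnn hηnn hξloc hηloc
      hineq hT.le⟩

/-- Deterministic log-transform lemma behind the Krylov–Bogolyubov bound.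
If `y ≥ 0` satisfies `y' + βy ≤ C y ξ + C η` with `β, C > 0`, `ξ, η ≥ 0`
locally integrable, and `M ≥ 2`, then `ζ(t) = log(max(y(t), M/2))` satisfies
(wherever it is differentiable) `ζ' + β·1_{y ≥ M/2} ≤ Cξ + (2C/M)η`, and
`β ∫₀^T 1_{y(t) ≥ M/2} dt ≤ ζ(0) - ζ(T) + C ∫₀^T ξ + (2C/M) ∫₀^T η`. -/
theorem stmt12 (y y' ξ η : ℝ → ℝ) (β C M : ℝ)
    (hβ : 0 < β) (hC : 0 < C) (hM : 2 ≤ M)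
    (hy : ∀ t, HasDerivAt y (y' t) t) (hynn : ∀ t, 0 ≤ y t)
    (hξnn : ∀ t, 0 ≤ ξ t) (hηnn : ∀ t, 0 ≤ η t)
    (hξloc : LocallyIntegrable ξ) (hηloc : LocallyIntegrable η)
    (hineq : ∀ t, y' t + β * y t ≤ C * y t * ξ t + C * η t) :
    (∀ t z, HasDerivAt (fun s => Real.log (max (y s) (M / 2))) z t →
      z + β * Set.indicator {s : ℝ | M / 2 ≤ y s} (fun _ => (1:ℝ)) t
        ≤ C * ξ t + (2 * C / M) * η t) ∧
    (∀ T : ℝ, 0 < T →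
      β * ∫ t in (0:ℝ)..T, Set.indicator {s : ℝ | M / 2 ≤ y s} (fun _ => (1:ℝ)) t
        ≤ Real.log (max (y 0) (M / 2)) - Real.log (max (y T) (M / 2))
            + C * (∫ t in (0:ℝ)..T, ξ t) + (2 * C / M) * ∫ t in (0:ℝ)..T, η t) :=
  stmt12_general y y' ξ η β C M hβ hC hM hy hξnn hηnn hξloc hηloc hineq
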